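/- Let A and B be monic finite Blaschke products of degree n. If the holomorphic function A - B has at least n zeros in the open unit disk, counted with multiplicity, then A = B. -/

import Mathlib

/-!
Write `A - B = F / (Q_a Q_b)` with `P_a = ∏ (X - aⱼ)`, `Q_a = ∏ (1 - āⱼ X)` and
`F = P_a Q_b - P_b Q_a`, a polynomial of degree at most `2n` with `X^{2n} F̄(1/X) = -F`.
This symmetry sends each zero `c ≠ 0` of `F` in the disk to a zero `1/c̄` of the same
multiplicity outside the closed disk, and a zero of order `m` at the origin lowers the degree of
`F` to at most `2n - m`. Moreover `F` vanishes somewhere on the unit circle: there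
`F(u) = uⁿ (Q̄_a Q_b - Q̄_b Q_a)(u)`, and `Q_b / Q_a` has a holomorphic logarithm on the closed
disk vanishing at `0`, whose imaginary part has mean zero on the circle by the mean value
property, so `Q_b / Q_a` is real at some `u`. If `F ≠ 0`, its `n` zeros in the disk, their
`n - m` reflections and the zero on the circle exceed its degree `2n - m`.
-/

open ComplexConjugate Metric Polynomial Real

namespace Polynomial

theorem reverse_prod {R ι : Type*} [CommSemiring R] [NoZeroDivisors R] (s : Finset ι)
    (f : ι → R[X]) : (∏ i ∈ s, f i).reverse = ∏ i ∈ s, (f i).reverse := by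
  classical
  induction s using Finset.induction_on with
  | empty => simpa using reverse_C (1 : R)
  | insert i s hi ih => rw [Finset.prod_insert hi, Finset.prod_insert hi, reverse_mul_of_domain, ih]

theorem reverse_pow {R : Type*} [CommSemiring R] [NoZeroDivisors R] (p : R[X]) (n : ℕ) :
    (p ^ n).reverse = p.reverse ^ n := by
  simpa using reverse_prod (Finset.range n) fun _ => p

theorem reverse_X_sub_C {R : Type*} [Ring R] [Nontrivial R] (c : R) :
    (X - C c).reverse = 1 - C c * X := by
  simp [reverse, reflect_sub, reflect_C]

theorem reverse_dvd_reflect {R : Type*} [Semiring R] [NoZeroDivisors R] {p q : R[X]} {N : ℕ}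
    (hpq : p ∣ q) (hq : q.natDegree ≤ N) : p.reverse ∣ q.reflect N := by
  obtain ⟨g, rfl⟩ := hpq
  rcases eq_or_ne p 0 with rfl | hp
  · simp
  rcases eq_or_ne g 0 with rfl | hg
  · simp
  rw [natDegree_mul hp hg] at hq
  obtain ⟨k, rfl⟩ := Nat.exists_eq_add_of_le hq
  rw [add_assoc, reflect_mul p g le_rfl (Nat.le_add_right _ _)]
  exact dvd_mul_right _ _

theorem natDegree_reflect_le_sub {R : Type*} [Semiring R] {p : R[X]} {N m : ℕ}
    (hp : p.natDegree ≤ N) (hm : X ^ m ∣ p) : (p.reflect N).natDegree ≤ N - m := by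
  refine natDegree_le_iff_coeff_eq_zero.2 fun i hi => ?_
  rw [coeff_reflect]
  by_cases hiN : i ≤ N
  · rw [revAt_le hiN]
    exact X_pow_dvd_iff.1 hm _ (by omega)
  · rw [revAt_eq_self_of_lt (by omega)]
    exact coeff_eq_zero_of_natDegree_lt (by omega)

theorem X_sub_C_inv_pow_dvd_reflect {K : Type*} [Field K] {p : K[X]} {N : ℕ}
    (hp : p.natDegree ≤ N) {c : K} (hc : c ≠ 0) {r : ℕ} (h : (X - C c) ^ r ∣ p) :
    (X - C c⁻¹) ^ r ∣ p.reflect N := by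
  have hfac : (1 - C c * X : K[X]) = (X - C c⁻¹) * C (-c) := by
    rw [sub_mul, ← C_mul, mul_neg, inv_mul_cancel₀ hc]
    simp only [map_neg, C_1]
    ring
  have := reverse_dvd_reflect h hp
  rw [reverse_pow, reverse_X_sub_C, hfac, mul_pow] at this
  exact (dvd_mul_right _ _).trans this

theorem analyticOrderAt_eval {𝕜 : Type*} [NontriviallyNormedField 𝕜] {p : 𝕜[X]} (hp : p ≠ 0)
    (c : 𝕜) : analyticOrderAt (fun z => p.eval z) c = p.rootMultiplicity c := by
  obtain ⟨q, hpq, hq⟩ := p.exists_eq_pow_rootMultiplicity_mul_and_not_dvd hp c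
  refine (AnalyticAt.analyticOrderAt_eq_natCast (AnalyticOnNhd.eval_polynomial p c trivial)).2
    ⟨fun z => q.eval z, AnalyticOnNhd.eval_polynomial q c trivial, ?_, ?_⟩
  · rwa [dvd_iff_isRoot] at hq
  · refine Filter.Eventually.of_forall fun z => ?_
    conv_lhs => rw [hpq]
    simp

theorem le_rootMultiplicity_of_iteratedDeriv_eq_zero {𝕜 : Type*} [NontriviallyNormedField 𝕜]
    [CharZero 𝕜] [CompleteSpace 𝕜] {p : 𝕜[X]} (hp : p ≠ 0) {f g : 𝕜 → 𝕜} {c : 𝕜}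
    (hf : AnalyticAt 𝕜 f c) (hg : AnalyticAt 𝕜 g c) (hpfg : (fun z => p.eval z) =ᶠ[nhds c] f * g)
    {K : ℕ} (hK : ∀ k < K, iteratedDeriv k f c = 0) : K ≤ p.rootMultiplicity c := by
  have hKf := (natCast_le_analyticOrderAt_iff_iteratedDeriv_eq_zero hf).2 hK
  have hp_order : (p.rootMultiplicity c : ℕ∞) = analyticOrderAt f c + analyticOrderAt g c := by
    rw [← analyticOrderAt_eval hp, analyticOrderAt_congr hpfg, analyticOrderAt_mul hf hg]
  exact_mod_cast hKf.trans (hp_order ▸ le_self_add)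

/- `(F.map conj).reflect N = -F` means `z ^ N * conj (F (1 / conj z)) = -F z`, so the zeros of `F`
are symmetric under the inversion `c ↦ (conj c)⁻¹` in the unit circle. -/

theorem rootMultiplicity_le_rootMultiplicity_inv_conj {F : ℂ[X]} {N : ℕ} (hF : F.natDegree ≤ N)
    (hrefl : (F.map (starRingEnd ℂ)).reflect N = -F) {c : ℂ} (hc : c ≠ 0) :
    F.rootMultiplicity c ≤ F.rootMultiplicity (conj c)⁻¹ := by
  rcases eq_or_ne F 0 with rfl | hF0
  · simp
  have hdvd := Polynomial.map_dvd (starRingEnd ℂ) (F.pow_rootMultiplicity_dvd c)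
  rw [Polynomial.map_pow, Polynomial.map_sub, map_X, map_C] at hdvd
  have := X_sub_C_inv_pow_dvd_reflect (natDegree_map_le.trans hF) (by simpa using hc) hdvd
  rwa [hrefl, dvd_neg, ← le_rootMultiplicity_iff hF0] at this

theorem natDegree_le_sub_rootMultiplicity_zero {F : ℂ[X]} {N : ℕ} (hF : F.natDegree ≤ N)
    (hrefl : (F.map (starRingEnd ℂ)).reflect N = -F) :
    F.natDegree ≤ N - F.rootMultiplicity 0 := by
  have hdvd := Polynomial.map_dvd (starRingEnd ℂ) (F.pow_rootMultiplicity_dvd 0)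
  rw [map_zero, sub_zero, Polynomial.map_pow, map_X] at hdvd
  rw [← natDegree_neg, ← hrefl]
  exact natDegree_reflect_le_sub (natDegree_map_le.trans hF) hdvd

theorem map_inv_conj_le_roots {F : ℂ[X]} {N : ℕ} (hF : F.natDegree ≤ N)
    (hrefl : (F.map (starRingEnd ℂ)).reflect N = -F) :
    (F.roots.filter (· ≠ 0)).map (fun c => (conj c)⁻¹) ≤ F.roots := by
  classical
  have hinv : Function.Involutive fun c : ℂ => (conj c)⁻¹ := fun c => by simp
  refine Multiset.le_iff_count.2 fun x => ?_
  conv_lhs => rw [← hinv x]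
  rw [Multiset.count_map_eq_count' _ _ hinv.injective, Multiset.count_filter, count_roots,
    count_roots]
  split_ifs with hx
  · simpa using rootMultiplicity_le_rootMultiplicity_inv_conj hF hrefl hx
  · exact Nat.zero_le _

theorem two_mul_card_roots_norm_lt_one_lt {F : ℂ[X]} {N : ℕ} (hF0 : F ≠ 0)
    (hF : F.natDegree ≤ N) (hrefl : (F.map (starRingEnd ℂ)).reflect N = -F) {u : ℂ}
    (hu : ‖u‖ = 1) (hFu : F.IsRoot u) : 2 * Multiset.card (F.roots.filter (‖·‖ < 1)) < N := by
  classical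
  set inner := F.roots.filter (‖·‖ < 1)
  set outer := (inner.filter (· ≠ 0)).map (fun c => (conj c)⁻¹)
  have hinner_le : inner ≤ F.roots := Multiset.filter_le _ _
  have houter_le : outer ≤ F.roots := le_trans (Multiset.map_le_map
    (Multiset.filter_le_filter _ hinner_le)) (map_inv_conj_le_roots hF hrefl)
  have houter : ∀ x ∈ outer, 1 < ‖x‖ := by
    simp only [outer, inner, Multiset.mem_map, Multiset.mem_filter]
    rintro _ ⟨c, ⟨⟨-, hc1⟩, hc0⟩, rfl⟩
    simpa [norm_inv] using one_lt_inv₀ (norm_pos_iff.2 hc0) |>.2 hc1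
  have hdisj_inner : Disjoint inner outer := Multiset.disjoint_left.2 fun hx hx' =>
    (houter _ hx').not_gt (Multiset.mem_filter.1 hx).2
  have hdisj_u : Disjoint (inner ∪ outer) {u} := by
    refine Multiset.disjoint_singleton.2 fun hu' => ?_
    rcases Multiset.mem_union.1 hu' with h | h
    · exact (Multiset.mem_filter.1 h).2.ne hu
    · exact (houter u h).ne' hu
  have hle : inner + outer + {u} ≤ F.roots := by
    rw [Multiset.add_eq_union_iff_disjoint.2 hdisj_inner,
      Multiset.add_eq_union_iff_disjoint.2 hdisj_u]
    exact Multiset.union_le (Multiset.union_le hinner_le houter_le)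
      (Multiset.singleton_le.2 ((mem_roots hF0).2 hFu))
  have hcard_outer : Multiset.card outer + F.rootMultiplicity 0 = Multiset.card inner := by
    have hsplit := congrArg Multiset.card (Multiset.filter_add_not (· = 0) inner)
    rw [Multiset.card_add, Multiset.filter_eq', Multiset.card_replicate] at hsplit
    simpa [outer, inner, Multiset.count_filter, count_roots, add_comm] using hsplit
  have hcard_roots := (Multiset.card_le_card hle).trans (card_roots' F)
  have hdeg := natDegree_le_sub_rootMultiplicity_zero hF hrefl
  simp only [Multiset.card_add, Multiset.card_singleton] at hcard_roots
  omega

end Polynomial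

theorem exists_mem_sphere_eq_circleAverage {f : ℂ → ℝ} {c : ℂ} {R : ℝ}
    (hf : ContinuousOn f (sphere c |R|)) : ∃ u ∈ sphere c |R|, f u = circleAverage f c R := by
  have hcont : Continuous fun θ => f (circleMap c R θ) :=
    hf.comp_continuous (continuous_circleMap c R) (circleMap_mem_sphere' c R)
  obtain ⟨θ, -, hθ⟩ := exists_eq_interval_average two_pi_pos.ne hcont.continuousOn
  exact ⟨circleMap c R θ, circleMap_mem_sphere' c R θ, by rw [hθ, circleAverage_eq_intervalAverage]⟩

theorem DiffContOnCl.exists_mem_sphere_im_eq {f : ℂ → ℂ} {c : ℂ} {R : ℝ}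
    (hf : DiffContOnCl ℂ f (ball c |R|)) : ∃ u ∈ sphere c |R|, (f u).im = (f c).im := by
  rcases eq_or_ne R 0 with rfl | hR
  · exact ⟨c, by simp, rfl⟩
  have hcont : ContinuousOn f (sphere c |R|) := hf.continuousOn.mono
    (by rw [closure_ball c (abs_ne_zero.2 hR)]; exact sphere_subset_closedBall)
  obtain ⟨u, hu, hfu⟩ := exists_mem_sphere_eq_circleAverage
    (Complex.continuous_im.comp_continuousOn hcont)
  refine ⟨u, hu, hfu.trans ?_⟩
  rw [← hf.circleAverage]
  exact Complex.imCLM.circleAverage_comp_comm hcont.circleIntegrable'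

theorem Complex.one_sub_mul_mem_slitPlane {w z : ℂ} (hw : ‖w‖ < 1) (hz : ‖z‖ ≤ 1) :
    1 - w * z ∈ slitPlane := by
  rw [sub_eq_add_neg]
  refine mem_slitPlane_of_norm_lt_one ?_
  rw [norm_neg, norm_mul]
  exact (mul_le_of_le_one_right (norm_nonneg w) hz).trans_lt hw

section Blaschke

variable {ι : Type*} [Fintype ι]

noncomputable def blaschkeNum (a : ι → ℂ) : ℂ[X] := ∏ j, (X - C (a j))

noncomputable def blaschkeDen (a : ι → ℂ) : ℂ[X] := ∏ j, (1 - C (conj (a j)) * X)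

/-- The numerator of `A - B` over the common denominator `blaschkeDen a * blaschkeDen b`. -/
noncomputable def blaschkeSubNum (a b : ι → ℂ) : ℂ[X] :=
  blaschkeNum a * blaschkeDen b - blaschkeNum b * blaschkeDen a

@[simp]
theorem eval_blaschkeNum (a : ι → ℂ) (z : ℂ) : (blaschkeNum a).eval z = ∏ j, (z - a j) := by
  simp [blaschkeNum, eval_prod]

@[simp]
theorem eval_blaschkeDen (a : ι → ℂ) (z : ℂ) :
    (blaschkeDen a).eval z = ∏ j, (1 - conj (a j) * z) := by
  simp [blaschkeDen, eval_prod]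

theorem prod_blaschkeFactor_eq_div (a : ι → ℂ) (z : ℂ) :
    ∏ j, (z - a j) / (1 - conj (a j) * z) = (blaschkeNum a).eval z / (blaschkeDen a).eval z := by
  simp [Finset.prod_div_distrib]

theorem eval_blaschkeDen_ne_zero {a : ι → ℂ} (ha : ∀ j, ‖a j‖ < 1) {z : ℂ} (hz : ‖z‖ ≤ 1) :
    (blaschkeDen a).eval z ≠ 0 := by
  rw [eval_blaschkeDen, Finset.prod_ne_zero_iff]
  exact fun j _ => Complex.slitPlane_ne_zero
    (Complex.one_sub_mul_mem_slitPlane (by simpa using ha j) hz)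

theorem eval_blaschkeNum_of_norm_eq_one (a : ι → ℂ) {u : ℂ} (hu : ‖u‖ = 1) :
    (blaschkeNum a).eval u = u ^ Fintype.card ι * conj ((blaschkeDen a).eval u) := by
  have huu : u * conj u = 1 := by
    rw [Complex.mul_conj, Complex.normSq_eq_norm_sq, hu]
    simp
  have hfac : ∀ w : ℂ, u - w = u * conj (1 - conj w * u) := fun w => by
    simp only [map_sub, map_one, map_mul, Complex.conj_conj]
    linear_combination w * huu
  simp only [eval_blaschkeNum, eval_blaschkeDen, hfac, Finset.prod_mul_distrib, map_prod,
    Finset.prod_const, Finset.card_univ]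

theorem natDegree_blaschkeNum (a : ι → ℂ) : (blaschkeNum a).natDegree = Fintype.card ι := by
  rw [blaschkeNum, natDegree_prod_of_monic _ _ fun j _ => monic_X_sub_C (a j)]
  simp

theorem reflect_map_conj_blaschkeNum (a : ι → ℂ) :
    ((blaschkeNum a).map (starRingEnd ℂ)).reflect (Fintype.card ι) = blaschkeDen a := by
  have hmap : (blaschkeNum a).map (starRingEnd ℂ) = blaschkeNum (conj ∘ a) := by
    simp [blaschkeNum, Polynomial.map_prod]
  rw [hmap, ← natDegree_blaschkeNum (conj ∘ a)]
  change (blaschkeNum (conj ∘ a)).reverse = _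
  simp [blaschkeNum, blaschkeDen, reverse_prod, reverse_X_sub_C]

theorem reflect_map_conj_blaschkeDen (a : ι → ℂ) :
    ((blaschkeDen a).map (starRingEnd ℂ)).reflect (Fintype.card ι) = blaschkeNum a := by
  have hconj : (starRingEnd ℂ).comp (starRingEnd ℂ) = RingHom.id ℂ :=
    RingHom.ext Complex.conj_conj
  rw [← reflect_map_conj_blaschkeNum, ← reflect_map, Polynomial.map_map, hconj, Polynomial.map_id,
    reflect_reflect]

theorem natDegree_blaschkeDen_le (a : ι → ℂ) : (blaschkeDen a).natDegree ≤ Fintype.card ι := by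
  rw [← reflect_map_conj_blaschkeNum]
  exact natDegree_reflect_le.trans
    (max_le le_rfl (natDegree_map_le.trans (natDegree_blaschkeNum a).le))

theorem natDegree_blaschkeSubNum_le (a b : ι → ℂ) :
    (blaschkeSubNum a b).natDegree ≤ Fintype.card ι + Fintype.card ι := by
  refine (natDegree_sub_le _ _).trans (max_le ?_ ?_) <;>
  exact natDegree_mul_le.trans
    (add_le_add (natDegree_blaschkeNum _).le (natDegree_blaschkeDen_le _))

theorem reflect_map_conj_blaschkeSubNum (a b : ι → ℂ) :
    ((blaschkeSubNum a b).map (starRingEnd ℂ)).reflect (Fintype.card ι + Fintype.card ι) =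
      -blaschkeSubNum a b := by
  have hdeg {p : ℂ[X]} (hp : p.natDegree ≤ Fintype.card ι) :
      (p.map (starRingEnd ℂ)).natDegree ≤ Fintype.card ι := natDegree_map_le.trans hp
  simp only [blaschkeSubNum, Polynomial.map_sub, Polynomial.map_mul, reflect_sub]
  rw [reflect_mul _ _ (hdeg (natDegree_blaschkeNum a).le) (hdeg (natDegree_blaschkeDen_le b)),
    reflect_mul _ _ (hdeg (natDegree_blaschkeNum b).le) (hdeg (natDegree_blaschkeDen_le a)),
    reflect_map_conj_blaschkeNum, reflect_map_conj_blaschkeNum, reflect_map_conj_blaschkeDen,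
    reflect_map_conj_blaschkeDen]
  ring

theorem le_rootMultiplicity_blaschkeSubNum {a b : ι → ℂ} (ha : ∀ j, ‖a j‖ < 1)
    (hb : ∀ j, ‖b j‖ < 1) (hF : blaschkeSubNum a b ≠ 0) {c : ℂ} (hc : ‖c‖ < 1) {K : ℕ}
    (hK : ∀ k < K, iteratedDeriv k (fun z =>
      (∏ j, (z - a j) / (1 - conj (a j) * z)) - ∏ j, (z - b j) / (1 - conj (b j) * z)) c = 0) :
    K ≤ (blaschkeSubNum a b).rootMultiplicity c := by
  simp only [prod_blaschkeFactor_eq_div] at hK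
  have hden {a : ι → ℂ} (ha : ∀ j, ‖a j‖ < 1) : ∀ z ∈ ball (0 : ℂ) 1, (blaschkeDen a).eval z ≠ 0 :=
    fun z hz => eval_blaschkeDen_ne_zero ha (by simpa using (mem_ball_zero_iff.1 hz).le)
  have hc_nhds : ball (0 : ℂ) 1 ∈ nhds c := isOpen_ball.mem_nhds (mem_ball_zero_iff.2 hc)
  refine le_rootMultiplicity_of_iteratedDeriv_eq_zero hF ?_
    ((AnalyticOnNhd.eval_polynomial (blaschkeDen a) c trivial).mul
      (AnalyticOnNhd.eval_polynomial (blaschkeDen b) c trivial))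
    ?_ hK
  · refine DifferentiableOn.analyticAt ?_ hc_nhds
    exact ((blaschkeNum a).differentiable.differentiableOn.div
      (blaschkeDen a).differentiable.differentiableOn (hden ha)).sub
      ((blaschkeNum b).differentiable.differentiableOn.div
      (blaschkeDen b).differentiable.differentiableOn (hden hb))
  · filter_upwards [hc_nhds] with z hz
    have := hden ha z hz
    have := hden hb z hz
    simp only [blaschkeSubNum, eval_sub, eval_mul, Pi.mul_apply]
    field_simp

theorem exists_norm_eq_one_conj_div_eq {a b : ι → ℂ} (ha : ∀ j, ‖a j‖ < 1)
    (hb : ∀ j, ‖b j‖ < 1) : ∃ u : ℂ, ‖u‖ = 1 ∧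
      conj ((blaschkeDen b).eval u / (blaschkeDen a).eval u) =
        (blaschkeDen b).eval u / (blaschkeDen a).eval u := by
  -- a logarithm of `blaschkeDen b / blaschkeDen a`, holomorphic on the closed disk
  set H : ℂ → ℂ := fun z =>
    ∑ j, (Complex.log (1 - conj (b j) * z) - Complex.log (1 - conj (a j) * z))
  have hslit {w : ℂ} (hw : ‖w‖ < 1) {z : ℂ} (hz : ‖z‖ ≤ 1) : 1 - conj w * z ∈ Complex.slitPlane :=
    Complex.one_sub_mul_mem_slitPlane (by simpa using hw) hz
  have hH : DiffContOnCl ℂ H (ball 0 |1|) := by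
    refine DifferentiableOn.diffContOnCl_ball (U := closedBall 0 1) (fun z hz => ?_) (by simp)
    have hz' : ‖z‖ ≤ 1 := by simpa using hz
    refine (DifferentiableAt.fun_sum fun j _ => ?_).differentiableWithinAt
    exact ((differentiableAt_id.const_mul _).const_sub 1).clog (hslit (hb j) hz') |>.sub
      (((differentiableAt_id.const_mul _).const_sub 1).clog (hslit (ha j) hz'))
  obtain ⟨u, hu, him⟩ := hH.exists_mem_sphere_im_eq
  have hu1 : ‖u‖ = 1 := by simpa using hu
  have hexp : Complex.exp (H u) = (blaschkeDen b).eval u / (blaschkeDen a).eval u := by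
    rw [Complex.exp_sum, eval_blaschkeDen, eval_blaschkeDen, ← Finset.prod_div_distrib]
    refine Finset.prod_congr rfl fun j _ => ?_
    rw [Complex.exp_sub, Complex.exp_log (Complex.slitPlane_ne_zero (hslit (hb j) hu1.le)),
      Complex.exp_log (Complex.slitPlane_ne_zero (hslit (ha j) hu1.le))]
  refine ⟨u, hu1, ?_⟩
  rw [← hexp, ← Complex.exp_conj, Complex.conj_eq_iff_im.2 (by simpa [H] using him)]

theorem exists_norm_eq_one_isRoot_blaschkeSubNum {a b : ι → ℂ} (ha : ∀ j, ‖a j‖ < 1)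
    (hb : ∀ j, ‖b j‖ < 1) : ∃ u : ℂ, ‖u‖ = 1 ∧ (blaschkeSubNum a b).IsRoot u := by
  obtain ⟨u, hu, hreal⟩ := exists_norm_eq_one_conj_div_eq ha hb
  have hA := eval_blaschkeDen_ne_zero ha hu.le
  rw [map_div₀, div_eq_div_iff ((_root_.map_ne_zero _).2 hA) hA] at hreal
  refine ⟨u, hu, ?_⟩
  simp only [IsRoot, blaschkeSubNum, eval_sub, eval_mul, eval_blaschkeNum_of_norm_eq_one _ hu]
  linear_combination (-u ^ Fintype.card ι) * hreal

end Blaschke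

/-- If `A` and `B` are monic Blaschke products of degree `n` and `A - B` has at least
`n` zeros in the open unit disk counted with multiplicity (encoded as a multiset `Z` of
cardinality `n` of points in the disk such that at each `c ∈ Z` all derivatives of
`A - B` of order `< Z.count c` vanish), then `A = B` on the unit disk. -/
theorem stmt_1 (n : ℕ) (a b : Fin n → ℂ)
    (ha : ∀ j, ‖a j‖ < 1) (hb : ∀ j, ‖b j‖ < 1)
    (Z : Multiset ℂ) (hcard : Multiset.card Z = n)
    (hZ : ∀ c ∈ Z, ‖c‖ < 1)
    (hmult : ∀ c ∈ Z, ∀ k < Z.count c,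
      iteratedDeriv k (fun z : ℂ =>
        (∏ j, (z - a j) / (1 - (starRingEnd ℂ) (a j) * z)) -
        (∏ j, (z - b j) / (1 - (starRingEnd ℂ) (b j) * z))) c = 0) :
    ∀ z : ℂ, ‖z‖ < 1 →
      (∏ j, (z - a j) / (1 - (starRingEnd ℂ) (a j) * z)) =
      (∏ j, (z - b j) / (1 - (starRingEnd ℂ) (b j) * z)) := by
  have hF : blaschkeSubNum a b = 0 := by
    by_contra hF
    have hZF : Z ≤ (blaschkeSubNum a b).roots := Multiset.le_iff_count.2 fun c => by
      by_cases hc : c ∈ Z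
      · rw [count_roots]
        exact le_rootMultiplicity_blaschkeSubNum ha hb hF (hZ c hc) (hmult c hc)
      · simp [Multiset.count_eq_zero.2 hc]
    obtain ⟨u, hu, hFu⟩ := exists_norm_eq_one_isRoot_blaschkeSubNum ha hb
    have hdisk := two_mul_card_roots_norm_lt_one_lt hF (natDegree_blaschkeSubNum_le a b)
      (reflect_map_conj_blaschkeSubNum a b) hu hFu
    have hZ_le := Multiset.card_le_card (Multiset.le_filter.2 ⟨hZF, hZ⟩)
    rw [Fintype.card_fin] at hdisk
    omega
  intro z hz
  have h := congrArg (eval z) hF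
  rw [blaschkeSubNum, eval_sub, eval_mul, eval_mul, eval_zero, sub_eq_zero] at h
  rwa [prod_blaschkeFactor_eq_div, prod_blaschkeFactor_eq_div,
    div_eq_div_iff (eval_blaschkeDen_ne_zero ha hz.le) (eval_blaschkeDen_ne_zero hb hz.le)]
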